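/- Fix natural numbers k ≥ 1 and N ≥ 2, and let r = ⌊log₂ N⌋. Then the number of natural numbers n < N such that the Catalan number Cₙ is congruent to 0 modulo 2^k is at least N − Σ_{i=0}^{k−1} binomial(r+1, i+1). -/

import Mathlib

/-!
Legendre's formula applied to `Cₙ · (n + 1)! · n! = (2n)!`, together with `s₂(2n) = s₂(n)`,
gives `ν₂(Cₙ) = s₂(n + 1) - 1`, where `s₂` is the binary digit sum. Hence `2^k ∤ Cₙ` exactly
when `n + 1` has at most `k` binary ones. For `n < N < 2^(r+1)` these `n + 1` are nonzero numbers
below `2^(r+1)` with between `1` and `k` ones, and a number below `2^b` with `j` ones is the same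
thing as a `j`-subset of `{0, …, b - 1}`.
-/

open Finset Nat

theorem sum_digits_two_mul (n : ℕ) : (digits 2 (2 * n)).sum = (digits 2 n).sum := by
  rcases n.eq_zero_or_pos with rfl | hn
  · simp
  · simp [digits_base_mul one_lt_two hn]

theorem sum_digits_two_eq_length_bitIndices (n : ℕ) :
    (digits 2 n).sum = n.bitIndices.length := by
  induction n using Nat.strong_induction_on with
  | _ n ih =>
    obtain ⟨m, rfl | rfl⟩ := n.even_or_odd'
    · rcases m.eq_zero_or_pos with rfl | hm
      · simp
      · rw [sum_digits_two_mul, ih m (by omega), bitIndices_two_mul, List.length_map]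
    · rw [bitIndices_two_mul_add_one, digits_def' one_lt_two (by omega)]
      have hdiv : (2 * m + 1) / 2 = m := by omega
      simp only [hdiv, Nat.mul_add_mod_self_left, List.sum_cons, List.length_cons,
        List.length_map, ih m (by omega)]
      omega

theorem catalan_ne_zero (n : ℕ) : catalan n ≠ 0 :=
  right_ne_zero_of_mul <| (succ_mul_catalan_eq_centralBinom n).trans_ne (centralBinom_ne_zero n)

theorem catalan_mul_factorial_mul_factorial (n : ℕ) :
    catalan n * (n + 1)! * n ! = (2 * n)! := by
  rw [factorial_succ, ← Nat.choose_mul_factorial_mul_factorial (by omega : n ≤ 2 * n),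
    ← centralBinom_eq_two_mul_choose, ← succ_mul_catalan_eq_centralBinom,
    show 2 * n - n = n by omega]
  ring

theorem padicValNat_two_catalan_add_one (n : ℕ) :
    padicValNat 2 (catalan n) + 1 = (digits 2 (n + 1)).sum := by
  have hval := congrArg (padicValNat 2) (catalan_mul_factorial_mul_factorial n)
  have hC := catalan_ne_zero n
  rw [padicValNat.mul (mul_ne_zero hC (factorial_ne_zero _)) (factorial_ne_zero n),
    padicValNat.mul hC (factorial_ne_zero _)] at hval
  have legendre (m : ℕ) : padicValNat 2 m ! = m - (digits 2 m).sum := by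
    simpa using sub_one_mul_padicValNat_factorial (p := 2) m
  rw [legendre, legendre, legendre, sum_digits_two_mul] at hval
  have := digit_sum_le 2 n
  have := digit_sum_le 2 (n + 1)
  omega

theorem two_pow_dvd_catalan_iff (k n : ℕ) :
    2 ^ k ∣ catalan n ↔ k < (digits 2 (n + 1)).sum := by
  rw [padicValNat_dvd_iff_le (catalan_ne_zero n), ← padicValNat_two_catalan_add_one]
  omega

theorem card_filter_sum_digits_two_eq_choose (b j : ℕ) :
    #{m ∈ range (2 ^ b) | (digits 2 m).sum = j} = b.choose j := by
  rw [show b.choose j = #(powersetCard j (range b)) by simp]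
  refine card_nbij' equivBitIndices equivBitIndices.symm ?_ ?_
    (fun m _ ↦ equivBitIndices.symm_apply_apply m) (fun s _ ↦ equivBitIndices.apply_symm_apply s)
  · intro m hm
    rw [mem_coe, mem_filter, mem_range] at hm
    rw [mem_coe, mem_powersetCard, equivBitIndices_apply,
      List.toFinset_card_of_nodup bitIndices_nodup, ← sum_digits_two_eq_length_bitIndices]
    refine ⟨fun i hi ↦ ?_, hm.2⟩
    rw [List.mem_toFinset] at hi
    exact mem_range.2 <| (Nat.pow_lt_pow_iff_right one_lt_two).1 <|
      (two_pow_le_of_mem_bitIndices hi).trans_lt hm.1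
  · intro s hs
    rw [mem_coe, mem_powersetCard] at hs
    rw [mem_coe, mem_filter, mem_range, equivBitIndices_symm_apply,
      sum_digits_two_eq_length_bitIndices, ← List.toFinset_card_of_nodup bitIndices_nodup,
      toFinset_bitIndices_sum_two_pow]
    exact ⟨Nat.geomSum_lt le_rfl fun i hi ↦ mem_range.1 (hs.1 hi), hs.2⟩

theorem card_filter_sum_digits_two_le_eq_sum_choose (b k : ℕ) :
    #{m ∈ range (2 ^ b) | (digits 2 m).sum ≤ k} = ∑ j ∈ range (k + 1), b.choose j := by
  rw [card_eq_sum_card_fiberwise (f := fun m ↦ (digits 2 m).sum) (t := range (k + 1))]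
  · refine sum_congr rfl fun j hj ↦ ?_
    rw [filter_filter, ← card_filter_sum_digits_two_eq_choose b j]
    congr 1
    refine filter_congr fun m _ ↦ ?_
    have := mem_range.1 hj
    constructor <;> rintro ⟨h1, h2⟩ <;> omega
  · intro m hm
    rw [mem_coe, mem_filter] at hm
    exact mem_coe.2 (mem_range.2 (Nat.lt_succ_of_le hm.2))

theorem card_filter_sum_digits_two_succ_le_le_sum_choose (N b k : ℕ) (hN : N < 2 ^ b) :
    #{n ∈ range N | (digits 2 (n + 1)).sum ≤ k} ≤ ∑ i ∈ range k, b.choose (i + 1) := by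
  have hshift : #{m ∈ range (N + 1) | (digits 2 m).sum ≤ k} =
      #{n ∈ range N | (digits 2 (n + 1)).sum ≤ k} + 1 := by
    rw [range_add_one', filter_insert, if_pos (by simp), card_insert_of_notMem (by simp),
      filter_map, card_map]
    rfl
  have hmono : #{m ∈ range (N + 1) | (digits 2 m).sum ≤ k} ≤
      #{m ∈ range (2 ^ b) | (digits 2 m).sum ≤ k} :=
    card_le_card (filter_subset_filter _ (range_subset_range.2 hN))
  rw [card_filter_sum_digits_two_le_eq_sum_choose, sum_range_succ', choose_zero_right] at hmono
  omega

theorem card_catalan_modEq_zero_lower_bound_general (k N : ℕ)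
    (r : ℕ) (hr : r = Nat.log 2 N) :
    (N : ℤ) - ∑ i ∈ Finset.range k, ((r + 1).choose (i + 1) : ℤ)
      ≤ ({n : ℕ | n < N ∧ catalan n ≡ 0 [MOD 2 ^ k]}.ncard : ℤ) := by
  have hset : {n : ℕ | n < N ∧ catalan n ≡ 0 [MOD 2 ^ k]} =
      ↑{n ∈ range N | 2 ^ k ∣ catalan n} := by
    ext n
    simp [Nat.modEq_zero_iff_dvd]
  have hbad : {n ∈ range N | ¬2 ^ k ∣ catalan n} = {n ∈ range N | (digits 2 (n + 1)).sum ≤ k} :=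
    filter_congr fun n _ ↦ by rw [two_pow_dvd_catalan_iff, not_lt]
  have hsplit : #{n ∈ range N | 2 ^ k ∣ catalan n} +
      #{n ∈ range N | (digits 2 (n + 1)).sum ≤ k} = N := by
    rw [← hbad, card_filter_add_card_filter_not, card_range]
  have hbad_le : (#{n ∈ range N | (digits 2 (n + 1)).sum ≤ k} : ℤ) ≤
      ∑ i ∈ range k, ((r + 1).choose (i + 1) : ℤ) :=
    mod_cast card_filter_sum_digits_two_succ_le_le_sum_choose N (r + 1) k
      (hr ▸ lt_pow_succ_log_self one_lt_two N)
  rw [hset, Set.ncard_coe_finset]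
  omega

/-- For `k ≥ 1`, `N ≥ 2` and `r = ⌊log₂ N⌋`, the count of `n < N` with
`Cₙ ≡ 0 (mod 2^k)` is at least `N − Σ_{i=0}^{k−1} C(r+1, i+1)`. -/
theorem card_catalan_modEq_zero_lower_bound (k N : ℕ) (hk : 1 ≤ k) (hN : 2 ≤ N)
    (r : ℕ) (hr : r = Nat.log 2 N) :
    (N : ℤ) - ∑ i ∈ Finset.range k, ((r + 1).choose (i + 1) : ℤ)
      ≤ ({n : ℕ | n < N ∧ catalan n ≡ 0 [MOD 2 ^ k]}.ncard : ℤ) :=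
  card_catalan_modEq_zero_lower_bound_general k N r hr
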